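/- Let A be a finitely generated abelian group and f : A → A an endomorphism whose restriction to the torsion subgroup T(A) is an automorphism of T(A). Then the torsion subgroup of the direct limit lim(A, f) of the stationary system with connecting maps f is isomorphic to T(A). -/

import Mathlib

/-!
An endomorphism maps torsion to torsion, so `x ↦ [x]` from `T(A)`, placed in the `0`-th copy
of `A`, lands in the torsion of `lim(A, f)`. It is injective: `[x] = 0` means `f^j x = 0` for
some `j`, and `f^j` is injective on `T(A)`. It is surjective: if `[a]` (with `a` in the `j`-th
copy) is torsion, say `n • [a] = 0`, then `n • f^(k-j) a = 0` for some `k ≥ j`, so `f^(k-j) a`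
is torsion, hence equals `f^k x` for some `x ∈ T(A)` because `f` permutes `T(A)`; then
`[x] = [f^k x] = [f^(k-j) a] = [a]`.
-/

open AddCommGroup (torsion le_comap_torsion)

namespace AddMonoid.End

variable {A : Type*} [AddCommGroup A] (f : AddMonoid.End A)

def powSystem (i j : ℕ) (_ : i ≤ j) : A →+ A := f ^ (j - i)

instance directedSystem_powSystem :
    DirectedSystem (fun _ : ℕ => A) fun i j h => powSystem f i j h where
  map_self i x := by
    simp only [powSystem, Nat.sub_self, pow_zero]
    rfl
  map_map k j i hij hjk x := by
    simp only [powSystem]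
    rw [← Nat.sub_add_sub_cancel hjk hij, pow_add]
    rfl

theorem mapsTo_torsion : Set.MapsTo f (torsion A) (torsion A) :=
  fun _ hx => le_comap_torsion (f : A →+ A) hx

noncomputable def torsionToLimit :
    torsion A →+ torsion (AddCommGroup.DirectLimit (fun _ : ℕ => A) (powSystem f)) :=
  ((AddCommGroup.DirectLimit.of _ _ 0).comp (torsion A).subtype).codRestrict _
    fun x => le_comap_torsion (AddCommGroup.DirectLimit.of (fun _ : ℕ => A) (powSystem f) 0) x.2

variable {f}

theorem torsionToLimit_injective (hf : Set.InjOn f (torsion A)) :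
    Function.Injective (torsionToLimit f) := by
  refine (injective_iff_map_eq_zero _).2 fun x hx => ?_
  have hx0 : AddCommGroup.DirectLimit.of (fun _ : ℕ => A) (powSystem f) 0 x = 0 :=
    congrArg Subtype.val hx
  obtain ⟨j, _, hj⟩ := AddCommGroup.DirectLimit.of.zero_exact 0 _ hx0
  refine Subtype.ext <| hf.iterate (mapsTo_torsion f) j x.2 (zero_mem _) ?_
  rw [← AddMonoid.End.coe_pow, ZeroMemClass.coe_zero, map_zero]
  exact hj

theorem torsionToLimit_surjective (hf : Set.SurjOn f (torsion A) (torsion A)) :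
    Function.Surjective (torsionToLimit f) := by
  rintro ⟨y, hy⟩
  obtain ⟨j, a, rfl⟩ :
      ∃ j a, AddCommGroup.DirectLimit.of (fun _ : ℕ => A) (powSystem f) j a = y :=
    AddCommGroup.DirectLimit.induction_on y fun i x => ⟨i, x, rfl⟩
  obtain ⟨n, hn, hna⟩ := isOfFinAddOrder_iff_nsmul_eq_zero.mp hy
  have hna' : AddCommGroup.DirectLimit.of (fun _ : ℕ => A) (powSystem f) j (n • a) = 0 := by
    rw [map_nsmul, hna]
  obtain ⟨k, hjk, hk⟩ := AddCommGroup.DirectLimit.of.zero_exact j _ hna'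
  have hb : powSystem f j k hjk a ∈ torsion A :=
    isOfFinAddOrder_iff_nsmul_eq_zero.mpr ⟨n, hn, by rwa [← map_nsmul]⟩
  obtain ⟨x, hx, hxb⟩ :
      ∃ x ∈ torsion A, (f ^ k : AddMonoid.End A) x = powSystem f j k hjk a := by
    simpa using hf.iterate k hb
  refine ⟨⟨x, hx⟩, Subtype.ext ?_⟩
  calc (torsionToLimit f ⟨x, hx⟩ : AddCommGroup.DirectLimit (fun _ : ℕ => A) (powSystem f))
      = AddCommGroup.DirectLimit.of _ _ 0 x := rfl
    _ = AddCommGroup.DirectLimit.of _ _ k (powSystem f 0 k k.zero_le x) :=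
      (AddCommGroup.DirectLimit.of_f _ _).symm
    _ = AddCommGroup.DirectLimit.of _ _ k (powSystem f j k hjk a) := by rw [← hxb]; rfl
    _ = AddCommGroup.DirectLimit.of _ _ j a := AddCommGroup.DirectLimit.of_f _ _

noncomputable def torsionLimitEquiv (hf : Set.BijOn f (torsion A) (torsion A)) :
    torsion (AddCommGroup.DirectLimit (fun _ : ℕ => A) (powSystem f)) ≃+ torsion A :=
  (AddEquiv.ofBijective (torsionToLimit f)
    ⟨torsionToLimit_injective hf.injOn, torsionToLimit_surjective hf.surjOn⟩).symm

end AddMonoid.End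

theorem stmt3_general {A : Type} [AddCommGroup A] (f : AddMonoid.End A)
    (hbij : Set.BijOn f (AddCommGroup.torsion A : Set A) (AddCommGroup.torsion A : Set A)) :
    Nonempty
      ((@AddCommGroup.torsion
          (AddCommGroup.DirectLimit (fun _ : ℕ => A)
            (fun i j _ => ((f ^ (j - i) : AddMonoid.End A) : A →+ A)))
          (AddCommGroup.DirectLimit.addCommGroup _ _)) ≃+
        AddCommGroup.torsion A) :=
  ⟨AddMonoid.End.torsionLimitEquiv hbij⟩

/-- If `A` is a finitely generated abelian group and `f : A → A` restricts to an automorphism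
of the torsion subgroup `T(A)`, then the torsion subgroup of the stationary direct limit
`lim(A, f)` is isomorphic to `T(A)`. -/
theorem stmt3 {A : Type} [AddCommGroup A] [AddGroup.FG A] (f : AddMonoid.End A)
    (hbij : Set.BijOn f (AddCommGroup.torsion A : Set A) (AddCommGroup.torsion A : Set A)) :
    Nonempty
      ((@AddCommGroup.torsion
          (AddCommGroup.DirectLimit (fun _ : ℕ => A)
            (fun i j _ => ((f ^ (j - i) : AddMonoid.End A) : A →+ A)))
          (AddCommGroup.DirectLimit.addCommGroup _ _)) ≃+
        AddCommGroup.torsion A) :=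
  stmt3_general f hbij
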